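/- For every λ ∈ H = {λ ∈ ℂ : 1/3 ≤ |λ|² ≤ 1/2, 0 ≤ Re(λ) ≤ (3|λ|² − 1)/2}, the closed disk of radius 1/2 centered at the origin is contained in A_λ{-1,0,1}. -/

import Mathlib

open MeasureTheory Set Pointwise ENNReal

noncomputable section

/-- The attractor `A_λ` of the IFS `{λz-1, λz+1}`:
the set of sums `∑ aₙ λⁿ` with `aₙ ∈ {-1,1}`. -/
def Attr (lam : ℂ) : Set ℂ :=
  {z | ∃ a : ℕ → ℤ, (∀ n, a n = -1 ∨ a n = 1) ∧
    HasSum (fun n : ℕ => (a n : ℂ) * lam ^ n) z}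

/-- The attractor `A_λ{-1,0,1}` of the IFS `{λz-1, λz, λz+1}`:
the set of sums `∑ aₙ λⁿ` with `aₙ ∈ {-1,0,1}`. -/
def Attr3 (lam : ℂ) : Set ℂ :=
  {z | ∃ a : ℕ → ℤ, (∀ n, a n = -1 ∨ a n = 0 ∨ a n = 1) ∧
    HasSum (fun n : ℕ => (a n : ℂ) * lam ^ n) z}

/-- The "Mandelbrot set" ℳ: those `λ` in the open unit disk for which
`1 + ∑_{k≥1} a_k λ^k = 0` for some coefficients `a_k ∈ {-1,0,1}`. -/
def MSet : Set ℂ :=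
  {lam | ‖lam‖ < 1 ∧ ∃ a : ℕ → ℤ, (∀ k, a k = -1 ∨ a k = 0 ∨ a k = 1) ∧
    HasSum (fun k : ℕ => (a k : ℂ) * lam ^ (k + 1)) (-1)}

/-- ℳ₀: zeros in the open unit disk of polynomials with coefficients in
`{0,±1}` and constant term `1`. -/
def MSet0 : Set ℂ :=
  {lam | ‖lam‖ < 1 ∧ ∃ n : ℕ, 1 ≤ n ∧ ∃ a : ℕ → ℤ,
    (∀ k, a k = -1 ∨ a k = 0 ∨ a k = 1) ∧
    1 + ∑ k ∈ Finset.range n, (a k : ℂ) * lam ^ (k + 1) = 0}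

/-- The sign `±1` given by the `n`-th binary digit of `x ∈ [0,1)`. -/
def signFun (n : ℕ) (x : ℝ) : ℤ := 2 * (⌊x * 2 ^ (n + 1)⌋ % 2) - 1

/-- The complex Bernoulli convolution `ν_λ`: the distribution of the random
series `∑ ±λⁿ` with i.i.d. fair signs, realized as the pushforward of
Lebesgue measure on `[0,1)` (whose binary digits are i.i.d. fair coin flips)
under `x ↦ ∑ₙ signFun n x • λⁿ`. -/
def nu (lam : ℂ) : Measure ℂ :=
  Measure.map (fun x : ℝ => ∑' n : ℕ, (signFun n x : ℂ) * lam ^ n)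
    (volume.restrict (Set.Ico (0 : ℝ) 1))

/-- The similarity dimension `s(λ) = log 2 / (−log |λ|)`. -/
def sdim (lam : ℂ) : ℝ := Real.log 2 / (- Real.log ‖lam‖)

/-- The set `H = {λ : 1/3 ≤ |λ|² ≤ 1/2, 0 ≤ Re λ ≤ (3|λ|²−1)/2}`. -/
def Hset : Set ℂ :=
  {lam | 1/3 ≤ ‖lam‖ ^ 2 ∧ ‖lam‖ ^ 2 ≤ 1/2 ∧
    0 ≤ lam.re ∧ lam.re ≤ (3 * ‖lam‖ ^ 2 - 1) / 2}

/-- Auxiliary: iterate a map on `ℝ × ℝ`. -/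
def itSeq (F : ℝ × ℝ → ℝ × ℝ) (init : ℝ × ℝ) : ℕ → ℝ × ℝ
  | 0 => init
  | n + 1 => F (itSeq F init n)

set_option maxHeartbeats 1600000 in
/-- For every λ ∈ H the closed disk of radius 1/2 centered at the origin
is contained in A_λ{-1,0,1}. -/
theorem closedBall_subset_attr3_of_mem_H (lam : ℂ) (hlam : lam ∈ Hset) :
    Metric.closedBall (0 : ℂ) (1 / 2) ⊆ Attr3 lam := by
  obtain ⟨h1, h2, h3, h4⟩ := hlam
  set c : ℝ := lam.re with hc
  set d : ℝ := lam.im with hd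
  have hr2 : ‖lam‖ ^ 2 = c ^ 2 + d ^ 2 := by
    rw [Complex.sq_norm, Complex.normSq_apply]; ring
  rw [hr2] at h1 h2 h4
  set r2 : ℝ := c ^ 2 + d ^ 2 with hr2def
  have hr2pos : 0 < r2 := by nlinarith
  set q : ℝ := 1 / (2 * r2) with hqdef
  set p : ℝ := (1 + 2 * c) * q with hpdef
  have hqpos : 0 < q := by positivity
  have hq1 : 1 ≤ q := by
    rw [hqdef, le_div_iff₀ (by linarith)]; linarith
  have hp32 : p ≤ 3 / 2 := by
    rw [hpdef, hqdef, mul_one_div, div_le_iff₀ (by linarith)]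
    nlinarith
  have hqp : q ≤ p := by
    rw [hpdef]
    nlinarith
  have hppos : 0 < p := lt_of_lt_of_le hqpos hqp
  have hd2 : r2 ^ 2 ≤ d ^ 2 := by nlinarith
  have hdabs : r2 ≤ |d| := by nlinarith [abs_nonneg d, sq_abs d]
  have hdne : d ≠ 0 := by
    intro h; rw [h] at hd2; nlinarith
  have habs : ‖lam‖ < 1 := by
    nlinarith [norm_nonneg lam]
  have habsnn : (0:ℝ) ≤ ‖lam‖ := norm_nonneg lam
  have hlam2 : lam ^ 2 = 2 * (c : ℂ) * lam - (r2 : ℂ) := by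
    rw [hr2def]
    apply Complex.ext <;>
      simp [pow_two, Complex.mul_re, Complex.mul_im, Complex.add_re, Complex.add_im,
        Complex.sub_re, Complex.sub_im, Complex.ofReal_re, Complex.ofReal_im] <;> ring
  -- Choosing the digit nearest to `x`
  have pick : ∀ x : ℝ, |x| ≤ p → ∃ aa : ℤ, (aa = -1 ∨ aa = 0 ∨ aa = 1) ∧
      |(aa : ℝ) - x| ≤ 1 / 2 := by
    intro x hx
    have hxp := (abs_le.mp hx).2
    have hxm := (abs_le.mp hx).1
    rcases le_or_gt x (-(1/2)) with h5 | h5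
    · refine ⟨-1, Or.inl rfl, ?_⟩
      push_cast
      rw [abs_le]; constructor <;> linarith
    rcases le_or_gt x (1/2) with h6 | h6
    · refine ⟨0, Or.inr (Or.inl rfl), ?_⟩
      push_cast
      rw [abs_le]; constructor <;> linarith
    · refine ⟨1, Or.inr (Or.inr rfl), ?_⟩
      push_cast
      rw [abs_le]; constructor <;> linarith
  -- The basic subdivision step
  have step : ∀ x y : ℝ, ∃ (aa : ℤ) (x' y' : ℝ), (aa = -1 ∨ aa = 0 ∨ aa = 1) ∧
      ((|x| ≤ p ∧ |y| ≤ q) → ((|x'| ≤ p ∧ |y'| ≤ q) ∧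
        (x : ℂ) + (y : ℂ) * lam = (aa : ℂ) + lam * ((x' : ℂ) + (y' : ℂ) * lam))) := by
    intro x y
    by_cases hcond : |x| ≤ p ∧ |y| ≤ q
    swap
    · exact ⟨0, 0, 0, Or.inr (Or.inl rfl), fun h => absurd h hcond⟩
    obtain ⟨hx, hy⟩ := hcond
    obtain ⟨aa, hamem, hxa⟩ := pick x hx
    obtain ⟨t, ht⟩ : ∃ t : ℝ, t = ((aa : ℝ) - x) / r2 := ⟨_, rfl⟩
    refine ⟨aa, y - 2 * c * t, t, hamem, fun _ => ?_⟩
    have hta : |t| ≤ q := by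
      rw [ht, hqdef, abs_div, abs_of_pos hr2pos, div_le_div_iff₀ hr2pos (by linarith)]
      rw [one_mul]
      calc |(aa : ℝ) - x| * (2 * r2) ≤ (1/2) * (2 * r2) :=
        mul_le_mul_of_nonneg_right hxa (by linarith)
      _ = r2 := by ring
    have htr : (t : ℂ) * (r2 : ℂ) = (aa : ℂ) - (x : ℂ) := by
      rw [ht]
      push_cast
      exact div_mul_cancel₀ _ (by exact_mod_cast hr2pos.ne' : (r2:ℂ) ≠ 0)
    refine ⟨⟨?_, hta⟩, ?_⟩
    · have h7 : |y - 2 * c * t| ≤ |y| + |2 * c * t| := by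
        calc |y - 2 * c * t| = |y + -(2 * c * t)| := by ring_nf
        _ ≤ |y| + |-(2 * c * t)| := abs_add_le _ _
        _ = |y| + |2 * c * t| := by rw [abs_neg]
      have h8 : |2 * c * t| = 2 * c * |t| := by
        rw [abs_mul, abs_of_nonneg (by linarith : (0:ℝ) ≤ 2 * c)]
      have h9 : c * |t| ≤ c * q := mul_le_mul_of_nonneg_left hta h3
      have hexp : (1 + 2 * c) * q = q + 2 * (c * q) := by ring
      rw [hpdef, hexp]
      linarith [h7, h8, h9, hy]
    · push_cast
      linear_combination htr - (t : ℂ) * hlam2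
  choose A X Y hA hgood using step
  intro z hz
  rw [Metric.mem_closedBall, dist_zero_right] at hz
  have hzre : |z.re| ≤ 1/2 := by
    have h5 := Complex.abs_re_le_norm z
    linarith
  have hzim : |z.im| ≤ 1/2 := by
    have h5 := Complex.abs_im_le_norm z
    linarith
  set y0 : ℝ := z.im / d with hy0
  set x0 : ℝ := z.re - c * y0 with hx0
  have hy0q : |y0| ≤ q := by
    rw [hy0, abs_div, hqdef, div_le_div_iff₀ (abs_pos.mpr hdne) (by linarith)]
    nlinarith [abs_nonneg z.im]
  have hx0p : |x0| ≤ p := by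
    have h7 : |x0| ≤ |z.re| + |c * y0| := by
      calc |x0| = |z.re + -(c * y0)| := by rw [hx0]; ring_nf
      _ ≤ |z.re| + |-(c * y0)| := abs_add_le _ _
      _ = |z.re| + |c * y0| := by rw [abs_neg]
    have h8 : |c * y0| = c * |y0| := by rw [abs_mul, abs_of_nonneg h3]
    rw [hpdef]
    nlinarith
  have hz0 : (x0 : ℂ) + (y0 : ℂ) * lam = z := by
    apply Complex.ext
    · simp only [Complex.add_re, Complex.mul_re, Complex.ofReal_re, Complex.ofReal_im,
        ← hc, ← hd]
      rw [hx0]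
      ring
    · simp only [Complex.add_im, Complex.mul_im, Complex.ofReal_re, Complex.ofReal_im,
        ← hc, ← hd]
      rw [hy0]
      field_simp
      ring
  set w : ℕ → ℝ × ℝ := itSeq (fun pr => (X pr.1 pr.2, Y pr.1 pr.2)) (x0, y0) with hw
  have hw0 : w 0 = (x0, y0) := rfl
  have hwsucc : ∀ n, w (n+1) = (X (w n).1 (w n).2, Y (w n).1 (w n).2) := fun n => rfl
  set a : ℕ → ℤ := fun n => A (w n).1 (w n).2 with ha
  have haan : ∀ n, a n = A (w n).1 (w n).2 := fun n => rfl
  have key : ∀ n, (|(w n).1| ≤ p ∧ |(w n).2| ≤ q) ∧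
      z = (∑ k ∈ Finset.range n, (a k : ℂ) * lam ^ k) +
        lam ^ n * (((w n).1 : ℂ) + ((w n).2 : ℂ) * lam) := by
    intro n
    induction n with
    | zero =>
      refine ⟨⟨by rw [hw0]; exact hx0p, by rw [hw0]; exact hy0q⟩, ?_⟩
      rw [hw0]
      simp [hz0]
    | succ n ih =>
      obtain ⟨hg, hs⟩ := ih
      obtain ⟨hg', hid⟩ := hgood _ _ hg
      refine ⟨by rw [hwsucc]; exact hg', ?_⟩
      rw [Finset.sum_range_succ, hwsucc n, hs, haan n]
      simp only []
      linear_combination (lam ^ n) * hid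
  have habsn : ∀ n, ‖((a n : ℤ) : ℂ)‖ ≤ 1 := by
    intro n
    rcases hA (w n).1 (w n).2 with h | h | h <;>
      rw [haan n, h] <;> norm_num
  have hsum : Summable (fun n : ℕ => ((a n : ℤ) : ℂ) * lam ^ n) := by
    apply Summable.of_norm_bounded (g := fun n => ‖lam‖ ^ n)
      (summable_geometric_of_lt_one habsnn habs)
    intro n
    rw [norm_mul, norm_pow]
    calc ‖((a n : ℤ) : ℂ)‖ * ‖lam‖ ^ n ≤ 1 * ‖lam‖ ^ n :=
      mul_le_mul_of_nonneg_right (habsn n) (by positivity)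
    _ = ‖lam‖ ^ n := one_mul _
  have hM : ∀ n, ‖lam ^ n * (((w n).1 : ℂ) + ((w n).2 : ℂ) * lam)‖ ≤
      (p + q) * ‖lam‖ ^ n := by
    intro n
    obtain ⟨⟨hxp, hyq⟩, -⟩ := key n
    rw [norm_mul, norm_pow, mul_comm]
    apply mul_le_mul_of_nonneg_right ?_ (by positivity)
    calc ‖((w n).1 : ℂ) + ((w n).2 : ℂ) * lam‖
        ≤ ‖(((w n).1 : ℝ) : ℂ)‖ + ‖(((w n).2 : ℝ) : ℂ) * lam‖ := norm_add_le _ _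
    _ ≤ p + q := by
        rw [norm_mul, Complex.norm_real, Complex.norm_real, Real.norm_eq_abs,
          Real.norm_eq_abs]
        have h9 : |(w n).2| * ‖lam‖ ≤ q * 1 := by
          apply mul_le_mul hyq habs.le habsnn (by linarith)
        nlinarith
  have hten : Filter.Tendsto (fun n => ∑ k ∈ Finset.range n, ((a k : ℤ) : ℂ) * lam ^ k)
      Filter.atTop (nhds z) := by
    have h0 : Filter.Tendsto (fun n => lam ^ n * (((w n).1 : ℂ) + ((w n).2 : ℂ) * lam))
        Filter.atTop (nhds 0) := by
      apply squeeze_zero_norm hM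
      have h5 := tendsto_pow_atTop_nhds_zero_of_lt_one habsnn habs
      simpa using h5.const_mul (p + q)
    have h1 : (fun n => ∑ k ∈ Finset.range n, ((a k : ℤ) : ℂ) * lam ^ k)
        = fun n => z - lam ^ n * (((w n).1 : ℂ) + ((w n).2 : ℂ) * lam) := by
      funext n
      linear_combination -(key n).2
    rw [h1]
    simpa using Filter.Tendsto.const_sub z h0
  have hzsum : HasSum (fun n : ℕ => ((a n : ℤ) : ℂ) * lam ^ n) z := by
    have h2 := hsum.hasSum
    have h3 := h2.tendsto_sum_nat
    rwa [tendsto_nhds_unique h3 hten] at h2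
  exact ⟨a, fun n => by rw [haan n]; exact hA _ _, hzsum⟩
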